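/- Let λ_D > 0. As t → ∞, ∫₀^∞ (1/x) exp(-π²t/(2x²) - λ_D x) dx is asymptotic to C₀ t^{-1/6} exp(-(3/2)π^{2/3}λ_D^{2/3}t^{1/3}) for some constant C₀ > 0. -/

import Mathlib

open MeasureTheory Real Filter Set Topology

/-!
The substitution `x = (τ / λ_D) u` with `τ = π^{2/3} λ_D^{2/3} t^{1/3}` turns the integral into
`∫₀^∞ u⁻¹ e^{-τ φ(u)} du` with `φ(u) = 1/(2u²) + u`, whose minimum is `φ(1) = 3/2`, with
`φ''(1) = 3`. This is Laplace's method: after `u = 1 + w / √τ`, the product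
`√τ e^{3τ/2} ∫₀^∞ u⁻¹ e^{-τ φ(u)} du` is the integral over `w` of a function tending to
`e^{-3w²/2}` and bounded by `2 / (1 + w²)` once `τ ≥ 1`, so by dominated convergence it tends to
`√(2π/3)`. Hence `C₀ = √(2π/3) π^{-1/3} λ_D^{-1/3}`.
-/

theorem integral_Ioi_one_div_mul_comp_mul_left (f : ℝ → ℝ) {s : ℝ} (hs : 0 < s) :
    ∫ u in Ioi (0:ℝ), 1 / u * f (s * u) = ∫ x in Ioi (0:ℝ), 1 / x * f x := by
  have h := integral_comp_mul_left_Ioi (fun x => 1 / x * f x) 0 hs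
  rw [mul_zero, smul_eq_mul] at h
  calc ∫ u in Ioi (0:ℝ), 1 / u * f (s * u)
      = s * ∫ u in Ioi (0:ℝ), 1 / (s * u) * f (s * u) := by
        rw [← integral_const_mul]
        congr with u
        by_cases hu : u = 0
        · simp [hu]
        · field_simp
    _ = ∫ x in Ioi (0:ℝ), 1 / x * f x := by rw [h, mul_inv_cancel_left₀ hs.ne']

theorem exp_neg_le_inv_one_add {x : ℝ} (hx : 0 ≤ x) : exp (-x) ≤ (1 + x)⁻¹ := by
  rw [exp_neg]
  exact inv_anti₀ (by positivity) (by linarith [add_one_le_exp x])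

noncomputable def laplaceIntegral (τ : ℝ) : ℝ :=
  ∫ u in Ioi (0:ℝ), u⁻¹ * exp (-(τ * ((2 * u ^ 2)⁻¹ + u)))

theorem integral_one_div_mul_exp_eq_laplaceIntegral {a b τ : ℝ} (hb : 0 < b) (hτ : 0 < τ)
    (h : τ ^ 3 = a * b ^ 2) :
    ∫ x in Ioi (0:ℝ), 1 / x * exp (-a / (2 * x ^ 2) - b * x) = laplaceIntegral τ := by
  rw [← integral_Ioi_one_div_mul_comp_mul_left _ (div_pos hτ hb)]
  refine setIntegral_congr_fun measurableSet_Ioi fun u (hu : 0 < u) => ?_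
  rw [one_div]
  congr 2
  field_simp
  linear_combination h

/-- Since `τ ((2u²)⁻¹ + u) - 3τ/2 = τ (u - 1)² (u⁻¹ + (2u²)⁻¹)`, the integrand of
`laplaceIntegral τ` is `e^{-3τ/2} laplaceKernel (τ (u - 1)²) u`. -/
noncomputable def laplaceKernel (a u : ℝ) : ℝ :=
  u⁻¹ * exp (-(a * (u⁻¹ + (2 * u ^ 2)⁻¹)))

theorem laplaceKernel_nonneg (a : ℝ) {u : ℝ} (hu : 0 ≤ u) : 0 ≤ laplaceKernel a u := by
  unfold laplaceKernel; positivity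

theorem laplaceKernel_le {a u : ℝ} (hu : 0 < u) (ha : (u - 1) ^ 2 ≤ a) :
    laplaceKernel a u ≤ 2 * (1 + a)⁻¹ := by
  have ha0 : 0 ≤ a := (sq_nonneg _).trans ha
  have hsplit : laplaceKernel a u = exp (-(a / u)) * (u⁻¹ * exp (-(a / (2 * u ^ 2)))) := by
    rw [laplaceKernel, mul_left_comm, ← exp_add]
    ring_nf
  rcases le_or_gt 1 u with h1 | h1
  · calc laplaceKernel a u ≤ exp (-(a / u)) * u⁻¹ := by
          rw [hsplit]
          gcongr
          exact mul_le_of_le_one_right (by positivity) (exp_le_one_iff.2 (neg_nonpos.2 (by positivity)))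
      _ ≤ (1 + a / u)⁻¹ * u⁻¹ := by gcongr; exact exp_neg_le_inv_one_add (by positivity)
      _ = (u + a)⁻¹ := by field_simp
      _ ≤ (1 + a)⁻¹ := inv_anti₀ (by positivity) (by linarith)
      _ ≤ 2 * (1 + a)⁻¹ := le_mul_of_one_le_left (by positivity) one_le_two
  · have hexp : exp (-(a / u)) ≤ (1 + a)⁻¹ :=
      (exp_le_exp.2 (neg_le_neg (le_div_self ha0 hu h1.le))).trans (exp_neg_le_inv_one_add ha0)
    have hpre : u⁻¹ * exp (-(a / (2 * u ^ 2))) ≤ 2 := by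
      calc u⁻¹ * exp (-(a / (2 * u ^ 2))) ≤ u⁻¹ * (1 + a / (2 * u ^ 2))⁻¹ := by
            gcongr; exact exp_neg_le_inv_one_add (by positivity)
        _ = 2 * u / (2 * u ^ 2 + a) := by field_simp
        _ ≤ 2 := by
            rw [div_le_iff₀ (by positivity)]
            nlinarith [sq_nonneg (2 * u - 1)]
    rw [hsplit, mul_comm 2 (1 + a)⁻¹]
    exact mul_le_mul hexp hpre (by positivity) (by positivity)

noncomputable def rescaledIntegrand (τ w : ℝ) : ℝ :=
  (Ioi 0).indicator (laplaceKernel (w ^ 2)) (1 + w / √τ)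

theorem integral_rescaledIntegrand {τ : ℝ} (hτ : 0 < τ) :
    ∫ w, rescaledIntegrand τ w = √τ * exp (3 * τ / 2) * laplaceIntegral τ := by
  have hs : 0 < √τ := sqrt_pos.2 hτ
  set g : ℝ → ℝ := (Ioi 0).indicator fun u => laplaceKernel (τ * (u - 1) ^ 2) u
  have hg : ∀ w, rescaledIntegrand τ w = g (1 + w / √τ) := fun w => by
    have : τ * (1 + w / √τ - 1) ^ 2 = w ^ 2 := by
      rw [add_sub_cancel_left, div_pow, sq_sqrt hτ.le]; field_simp
    simp only [rescaledIntegrand, g, indicator_apply, this]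
  have hshift : ∫ w, g (1 + w / √τ) = √τ * ∫ u, g u := by
    rw [Measure.integral_comp_div (fun v => g (1 + v)), abs_of_pos hs, smul_eq_mul,
      integral_add_left_eq_self]
  have hcenter : exp (3 * τ / 2) * laplaceIntegral τ = ∫ u, g u := by
    rw [integral_indicator measurableSet_Ioi, laplaceIntegral, ← integral_const_mul]
    refine setIntegral_congr_fun measurableSet_Ioi fun u (hu : 0 < u) => ?_
    rw [laplaceKernel, mul_left_comm, ← exp_add]
    congr 2
    field_simp
    ring
  simp only [hg, hshift, ← hcenter, mul_assoc]

theorem measurable_rescaledIntegrand (τ : ℝ) : Measurable (rescaledIntegrand τ) := by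
  unfold rescaledIntegrand laplaceKernel
  simp only [indicator_apply, mem_Ioi]
  exact Measurable.ite (measurableSet_lt measurable_const (by fun_prop)) (by fun_prop)
    measurable_const

theorem norm_rescaledIntegrand_le {τ : ℝ} (hτ : 1 ≤ τ) (w : ℝ) :
    ‖rescaledIntegrand τ w‖ ≤ 2 * (1 + w ^ 2)⁻¹ := by
  rw [rescaledIntegrand, indicator_apply]
  split_ifs with hu
  · have hu : 0 < 1 + w / √τ := hu
    rw [norm_of_nonneg (laplaceKernel_nonneg _ hu.le)]
    refine laplaceKernel_le hu ?_
    rw [add_sub_cancel_left, div_pow, sq_sqrt (by linarith)]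
    exact div_le_self (sq_nonneg w) hτ
  · rw [norm_zero]; positivity

theorem tendsto_rescaledIntegrand (w : ℝ) :
    Tendsto (fun τ => rescaledIntegrand τ w) atTop (𝓝 (exp (-(3 / 2) * w ^ 2))) := by
  have hu : Tendsto (fun τ => 1 + w / √τ) atTop (𝓝 1) := by
    simpa using tendsto_const_nhds.add
      (tendsto_const_nhds.div_atTop tendsto_sqrt_atTop)
  have hcont : ContinuousAt ((Ioi 0).indicator (laplaceKernel (w ^ 2))) 1 := by
    have hker : ContinuousAt (laplaceKernel (w ^ 2)) 1 := by
      unfold laplaceKernel; fun_prop (disch := norm_num)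
    refine hker.congr ?_
    filter_upwards [Ioi_mem_nhds one_pos] with u hu
    exact (indicator_of_mem hu _).symm
  have hval : (Ioi 0).indicator (laplaceKernel (w ^ 2)) 1 = exp (-(3 / 2) * w ^ 2) := by
    rw [indicator_of_mem (mem_Ioi.2 one_pos), laplaceKernel, inv_one, one_mul]
    ring_nf
  rw [← hval]
  exact hcont.tendsto.comp hu

theorem tendsto_laplaceIntegral :
    Tendsto (fun τ => √τ * exp (3 * τ / 2) * laplaceIntegral τ) atTop (𝓝 √(2 * π / 3)) := by
  have hlim := tendsto_integral_filter_of_dominated_convergence (F := rescaledIntegrand)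
    (fun w => 2 * (1 + w ^ 2)⁻¹)
    (Eventually.of_forall fun τ => (measurable_rescaledIntegrand τ).aestronglyMeasurable)
    ((eventually_ge_atTop 1).mono fun τ hτ => Eventually.of_forall (norm_rescaledIntegrand_le hτ))
    (integrable_inv_one_add_sq.const_mul 2)
    (Eventually.of_forall tendsto_rescaledIntegrand)
  rw [integral_gaussian, show π / (3 / 2) = 2 * π / 3 by ring] at hlim
  refine hlim.congr' ?_
  filter_upwards [eventually_gt_atTop 0] with τ hτ
  exact integral_rescaledIntegrand hτ

/-- For `λ_D > 0`, as `t → ∞`, `∫₀^∞ (1/x) exp(-π²t/(2x²) - λ_D x) dx` is asymptotic to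
`C₀ t^{-1/6} exp(-(3/2)π^{2/3}λ_D^{2/3}t^{1/3})` for some constant `C₀ > 0`. -/
theorem laplace_asymptotic_inv_x (lD : ℝ) (hl : 0 < lD) :
    ∃ C₀ > (0:ℝ),
      Tendsto (fun t : ℝ =>
          (∫ x in Set.Ioi (0:ℝ), (1 / x) * Real.exp (-(π ^ 2 * t) / (2 * x ^ 2) - lD * x)) /
            (C₀ * t ^ (-(1:ℝ)/6) *
              Real.exp (-(3/2) * π ^ ((2:ℝ)/3) * lD ^ ((2:ℝ)/3) * t ^ ((1:ℝ)/3))))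
        atTop (nhds 1) := by
  set c := π ^ ((2:ℝ)/3) * lD ^ ((2:ℝ)/3) with hc_def
  have hc : 0 < c := by positivity
  have hL : 0 < √(2 * π / 3) := by positivity
  refine ⟨√(2 * π / 3) / √c, by positivity, ?_⟩
  have hτ : Tendsto (fun t : ℝ => c * t ^ ((1:ℝ)/3)) atTop atTop :=
    (tendsto_rpow_atTop (by norm_num)).const_mul_atTop hc
  have hlim := (tendsto_laplaceIntegral.comp hτ).div_const √(2 * π / 3)
  rw [div_self hL.ne'] at hlim
  refine hlim.congr' ?_
  filter_upwards [eventually_gt_atTop 0] with t ht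
  have hcube : (c * t ^ ((1:ℝ)/3)) ^ 3 = π ^ 2 * t * lD ^ 2 := by
    simp only [hc_def, mul_pow, ← rpow_natCast, ← rpow_mul pi_pos.le, ← rpow_mul hl.le,
      ← rpow_mul ht.le]
    norm_num
    ring
  have hsqrt : √(c * t ^ ((1:ℝ)/3)) = √c * (t ^ (-(1:ℝ)/6))⁻¹ := by
    rw [sqrt_mul hc.le, sqrt_eq_rpow (t ^ _), ← rpow_mul ht.le, neg_div, rpow_neg ht.le, inv_inv]
    norm_num
  have hexp : -(3/2) * π ^ ((2:ℝ)/3) * lD ^ ((2:ℝ)/3) * t ^ ((1:ℝ)/3)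
      = -(3 * (c * t ^ ((1:ℝ)/3)) / 2) := by
    rw [hc_def]; ring
  rw [Function.comp_apply, hsqrt, hexp, exp_neg,
    integral_one_div_mul_exp_eq_laplaceIntegral hl (by positivity) hcube]
  field_simp
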